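/- Let G be a locally compact abelian group, G₀ ≤ G a subgroup, Y ≤ G an open compact subgroup, and suppose w : G → ℂ is Y-periodic and integrable with ∫_G |w| < ∞. Then for every x ∈ G the 'unfolded' function z ↦ w(x + z) is absolutely integrable over G₀ with respect to Haar measure on G₀ (G₀ given the Haar measure for which the unfolding formula below holds), with ∫_{G₀} |w(x+z)| dz ≤ (#(G₀ ∩ Y)/μ(Y)) ∫_G |w|. -/

import Mathlib

/-!
By periodicity, `‖w (x + z)‖ * μ Y` is the integral of `‖w‖` over the coset `(x + z) + Y`.
Two elements of `G₀` whose cosets share a point differ by an element of `G₀ ∩ Y`, so the cosets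
`(x + z) + Y`, `z ∈ G₀`, cover each point of `G` at most `#(G₀ ∩ Y)` times; summing over `z`
therefore gives at most `#(G₀ ∩ Y) * ∫ ‖w‖`. The count is finite because a discrete subgroup
meets the compact set `Y` in finitely many points.
-/

open MeasureTheory Finset
open scoped ENNReal Pointwise

@[to_additive]
theorem Subgroup.finite_inter_of_isCompact {G : Type*} [Group G] [TopologicalSpace G]
    [IsTopologicalGroup G] (H : Subgroup G) [DiscreteTopology H] {K : Set G}
    (hK : IsCompact K) : ((H : Set G) ∩ K).Finite := by
  obtain ⟨V, hV, hVH⟩ := nhds_inter_eq_singleton_of_mem_discrete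
    (isDiscrete_iff_discreteTopology.mpr ‹_›) H.one_mem
  obtain ⟨W, hW, hWV⟩ := exists_nhds_split_inv hV
  obtain ⟨t, hKt⟩ := compact_covered_by_mul_left_translates hK
    ⟨1, mem_interior_iff_mem_nhds.mpr (inv_mem_nhds_one G hW)⟩
  have hsub : ∀ g, ((H : Set G) ∩ (g * ·) ⁻¹' W⁻¹).Subsingleton := by
    rintro g a ⟨haH, ha⟩ b ⟨hbH, hb⟩
    have hab : b⁻¹ * a ∈ V ∩ H :=
      ⟨by simpa [mul_assoc] using hWV _ hb _ ha, H.mul_mem (H.inv_mem hbH) haH⟩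
    rw [hVH] at hab
    exact (inv_mul_eq_one.mp hab).symm
  refine (t.finite_toSet.biUnion fun g _ => (hsub g).finite).subset ?_
  rintro a ⟨haH, haK⟩
  obtain ⟨g, hg, hag⟩ := Set.mem_iUnion₂.mp (hKt haK)
  exact Set.mem_biUnion hg ⟨haH, hag⟩

theorem AddSubgroup.card_le_card_inter_of_forall_neg_add_mem {G : Type*} [AddGroup G]
    {H K : AddSubgroup G} (hfin : ((H : Set G) ∩ K).Finite) (a : G) (F : Finset H)
    (hF : ∀ z ∈ F, -(z : G) + a ∈ K) : #F ≤ Nat.card ((H : Set G) ∩ K : Set G) := by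
  rcases F.eq_empty_or_nonempty with rfl | ⟨z₀, hz₀⟩
  · simp
  have := hfin.to_subtype
  let f : F → ((H : Set G) ∩ K : Set G) := fun z =>
    ⟨-(z₀ : G) + z, H.add_mem (H.neg_mem z₀.2) z.1.2, by
      simpa [add_assoc] using K.add_mem (hF z₀ hz₀) (K.neg_mem (hF z z.2))⟩
  have hf : Function.Injective f := fun z z' h =>
    Subtype.ext <| Subtype.ext <| add_left_cancel congr(Subtype.val $h)
  simpa using Nat.card_le_card_of_injective f hf

theorem tsum_setLIntegral_le_mul_lintegral {α ι : Type*} [MeasurableSpace α] {μ : Measure α}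
    {f : α → ℝ≥0∞} (hf : AEMeasurable f μ) {s : ι → Set α} (hs : ∀ i, MeasurableSet (s i))
    {N : ℕ} (hN : ∀ x (F : Finset ι), (∀ i ∈ F, x ∈ s i) → #F ≤ N) :
    ∑' i, ∫⁻ x in s i, f x ∂μ ≤ N * ∫⁻ x, f x ∂μ := by
  classical
  have hpoint : ∀ (F : Finset ι) x, ∑ i ∈ F, (s i).indicator f x ≤ N * f x := fun F x => by
    rw [Finset.sum_indicator_eq_sum_filter, Finset.sum_const, nsmul_eq_mul]
    gcongr
    exact_mod_cast hN x _ fun i hi => (Finset.mem_filter.mp hi).2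
  rw [ENNReal.tsum_eq_iSup_sum]
  refine iSup_le fun F => ?_
  calc ∑ i ∈ F, ∫⁻ x in s i, f x ∂μ
      = ∫⁻ x, ∑ i ∈ F, (s i).indicator f x ∂μ := by
        rw [lintegral_finsetSum' F fun i _ => hf.indicator (hs i)]
        simp only [lintegral_indicator (hs _)]
    _ ≤ ∫⁻ x, N * f x ∂μ := lintegral_mono (hpoint F)
    _ = N * ∫⁻ x, f x ∂μ := lintegral_const_mul' _ _ (ENNReal.natCast_ne_top N)

theorem setLIntegral_vadd_eq_mul_measure {G : Type*} [AddGroup G] [MeasurableSpace G]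
    [MeasurableAdd G] (μ : Measure G) [μ.IsAddLeftInvariant] {Y : AddSubgroup G}
    (hY : MeasurableSet (Y : Set G)) {f : G → ℝ≥0∞} (hf : ∀ x, ∀ y ∈ Y, f (x + y) = f x)
    (a : G) : ∫⁻ x in a +ᵥ (Y : Set G), f x ∂μ = f a * μ Y := by
  rw [← measure_vadd μ a (Y : Set G), ← setLIntegral_const]
  refine setLIntegral_congr_fun (hY.const_vadd a) fun x hx => ?_
  rw [← hf a _ ((mem_leftAddCoset_iff a).mp hx), add_neg_cancel_left]

theorem tsum_add_mul_measure_le {G : Type*} [AddGroup G] [MeasurableSpace G] [MeasurableAdd G]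
    (μ : Measure G) [μ.IsAddLeftInvariant] {Y : AddSubgroup G} (hY : MeasurableSet (Y : Set G))
    {H : AddSubgroup G} (hfin : ((H : Set G) ∩ Y).Finite) {f : G → ℝ≥0∞}
    (hf : AEMeasurable f μ) (hper : ∀ x, ∀ y ∈ Y, f (x + y) = f x) (x : G) :
    (∑' z : H, f (x + z)) * μ Y ≤ Nat.card ((H : Set G) ∩ Y : Set G) * ∫⁻ t, f t ∂μ := by
  rw [← ENNReal.tsum_mul_right]
  simp_rw [← setLIntegral_vadd_eq_mul_measure μ hY hper]
  refine tsum_setLIntegral_le_mul_lintegral hf (fun z => hY.const_vadd _) fun t F hF =>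
    AddSubgroup.card_le_card_inter_of_forall_neg_add_mem hfin (-x + t) F fun z hz => ?_
  simpa [neg_add_rev, add_assoc] using (mem_leftAddCoset_iff _).mp (hF z hz)

theorem summable_norm_and_tsum_norm_le_toReal {ι E : Type*} [SeminormedAddCommGroup E]
    {f : ι → E} {B : ℝ≥0∞} (hB : B ≠ ∞) (h : ∑' i, ‖f i‖ₑ ≤ B) :
    Summable (fun i => ‖f i‖) ∧ ∑' i, ‖f i‖ ≤ B.toReal := by
  have hT : ∑' i, ‖f i‖ₑ ≠ ∞ := ne_top_of_le_ne_top hB h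
  refine ⟨tsum_enorm_ne_top_iff_summable_norm.mp hT, ?_⟩
  calc ∑' i, ‖f i‖ = (∑' i, ‖f i‖ₑ).toReal := by
        simp [ENNReal.tsum_toReal_eq fun _ => enorm_ne_top]
    _ ≤ B.toReal := ENNReal.toReal_mono hB h

theorem unfolded_sum_bound_general
    {G : Type*} [AddCommGroup G] [TopologicalSpace G] [IsTopologicalAddGroup G]
    [MeasurableSpace G] [BorelSpace G]
    (μ : Measure G) [μ.IsAddHaarMeasure]
    (Y : AddSubgroup G) (hYopen : IsOpen (Y : Set G)) (hYcpt : IsCompact (Y : Set G))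
    (hμY : 0 < μ (Y : Set G))
    (G₀ : AddSubgroup G) (hG₀ : DiscreteTopology G₀)
    (w : G → ℂ) (hw : Integrable w μ)
    (hper : ∀ x : G, ∀ y ∈ Y, w (x + y) = w x) :
    ∀ x : G, Summable (fun z : G₀ => ‖w (x + z)‖) ∧
      (∑' z : G₀, ‖w (x + z)‖) ≤
        (Nat.card ((G₀ : Set G) ∩ (Y : Set G) : Set G) : ℝ) / (μ (Y : Set G)).toReal *
          ∫ y, ‖w y‖ ∂μ := by
  intro x
  have hfin : ((G₀ : Set G) ∩ Y).Finite := G₀.finite_inter_of_isCompact hYcpt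
  have hbound := tsum_add_mul_measure_le μ hYopen.measurableSet hfin
    hw.aestronglyMeasurable.enorm (fun t y hy => by rw [hper t y hy]) x
  set N := Nat.card ((G₀ : Set G) ∩ (Y : Set G) : Set G)
  obtain ⟨hsum, hle⟩ := summable_norm_and_tsum_norm_le_toReal
    (B := N * (∫⁻ y, ‖w y‖ₑ ∂μ) / μ Y)
    (ENNReal.div_ne_top (ENNReal.mul_ne_top (ENNReal.natCast_ne_top N) hw.2.ne) hμY.ne')
    ((ENNReal.le_div_iff_mul_le (.inl hμY.ne') (.inl hYcpt.measure_lt_top.ne)).mpr hbound)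
  refine ⟨hsum, hle.trans_eq ?_⟩
  rw [ENNReal.toReal_div, ENNReal.toReal_mul, ENNReal.toReal_natCast,
    integral_norm_eq_lintegral_enorm hw.1]
  ring

/-- For an integrable `Y`-periodic function `w` (with `Y` open compact of positive
measure) and a discrete subgroup `G₀`, the unfolded sum `∑_{z ∈ G₀} ‖w(x+z)‖`
converges and is at most `(#(G₀ ∩ Y)/μ(Y)) ∫_G ‖w‖`. -/
theorem unfolded_sum_bound
    {G : Type*} [AddCommGroup G] [TopologicalSpace G] [IsTopologicalAddGroup G]
    [LocallyCompactSpace G] [MeasurableSpace G] [BorelSpace G]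
    (μ : Measure G) [μ.IsAddHaarMeasure]
    (Y : AddSubgroup G) (hYopen : IsOpen (Y : Set G)) (hYcpt : IsCompact (Y : Set G))
    (hμY : 0 < μ (Y : Set G))
    (G₀ : AddSubgroup G) (hG₀ : DiscreteTopology G₀)
    (w : G → ℂ) (hw : Integrable w μ)
    (hper : ∀ x : G, ∀ y ∈ Y, w (x + y) = w x) :
    ∀ x : G, Summable (fun z : G₀ => ‖w (x + z)‖) ∧
      (∑' z : G₀, ‖w (x + z)‖) ≤
        (Nat.card ((G₀ : Set G) ∩ (Y : Set G) : Set G) : ℝ) / (μ (Y : Set G)).toReal *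
          ∫ y, ‖w y‖ ∂μ :=
  unfolded_sum_bound_general μ Y hYopen hYcpt hμY G₀ hG₀ w hw hper
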